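/- arXiv:0710.4544 — 2 statements merged into one kernel-verified Lean document; each statement's English description precedes it below -/
import Mathlib

section
/- Let (M,B) be a quadratic Malcev superalgebra and D an odd skew-supersymmetric Malcev operator of (M,B). Then the bilinear map φ : M × M → K defined by φ(X,Y) = -B(D(X),Y) is a Malcev 2-cocycle on M. -/
open scoped BigOperators

/-- The sign `(-1)^(x·y)` for degrees `x, y ∈ ℤ/2`. -/
def sgn (K : Type) [Field K] (x y : ZMod 2) : K := (-1 : K) ^ (x.val * y.val)

section Defs

variable (K : Type) [Field K] (V : Type) [AddCommGroup V] [Module K V]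

/-- `(g, mul)` is a Malcev superalgebra structure on `V`:  a `ℤ/2`-grading by submodules
which is a direct sum decomposition, such that the (bilinear) multiplication respects the
grading, is graded skew-symmetric (`XY = -(-1)^{xy} YX`) and satisfies the graded Malcev
identity. -/
def IsMalcevSuper (g : ZMod 2 → Submodule K V) (mul : V →ₗ[K] V →ₗ[K] V) : Prop :=
  DirectSum.IsInternal g ∧
    (∀ x y X Y, X ∈ g x → Y ∈ g y → mul X Y ∈ g (x + y)) ∧
    (∀ x y X Y, X ∈ g x → Y ∈ g y → mul X Y = -(sgn K x y) • mul Y X) ∧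
    (∀ x y z t X Y Z T, X ∈ g x → Y ∈ g y → Z ∈ g z → T ∈ g t →
      sgn K y z • mul (mul X Z) (mul Y T) =
        mul (mul (mul X Y) Z) T + sgn K x (y + z + t) • mul (mul (mul Y Z) T) X +
          sgn K (x + y) (z + t) • mul (mul (mul Z T) X) Y +
          sgn K t (x + y + z) • mul (mul (mul T X) Y) Z)

/-- `B` is an invariant scalar product: even, supersymmetric, non-degenerate, invariant. -/
def IsQuadratic (g : ZMod 2 → Submodule K V) (mul : V →ₗ[K] V →ₗ[K] V)
    (B : V →ₗ[K] V →ₗ[K] K) : Prop :=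
  (∀ x y X Y, X ∈ g x → Y ∈ g y → x ≠ y → B X Y = 0) ∧
    (∀ x y X Y, X ∈ g x → Y ∈ g y → B X Y = sgn K x y * B Y X) ∧
    (∀ X, (∀ Y, B X Y = 0) → X = 0) ∧
    (∀ X Y Z, B (mul X Y) Z = B X (mul Y Z))

/-- A linear endomorphism is homogeneous of degree `α`. -/
def IsHomogMap (g : ZMod 2 → Submodule K V) (α : ZMod 2) (φ : V →ₗ[K] V) : Prop :=
  ∀ x X, X ∈ g x → φ X ∈ g (x + α)

/-- Malcev operator identity for a homogeneous endomorphism `φ`. -/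
def IsMalcevOp (g : ZMod 2 → Submodule K V) (mul : V →ₗ[K] V →ₗ[K] V)
    (φ : V →ₗ[K] V) : Prop :=
  ∀ x y z X Y Z, X ∈ g x → Y ∈ g y → Z ∈ g z →
    φ (mul (mul X Y) Z) =
      mul (mul (φ X) Y) Z - sgn K x y • mul (φ Y) (mul X Z) -
        sgn K z (x + y) • mul (mul (φ Z) X) Y - sgn K x (y + z) • mul (φ (mul Y Z)) X

/-- `φ` (homogeneous of degree `α`) is skew-supersymmetric with respect to `B`. -/
def IsSkewSuper (g : ZMod 2 → Submodule K V) (B : V →ₗ[K] V →ₗ[K] K) (α : ZMod 2)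
    (φ : V →ₗ[K] V) : Prop :=
  ∀ x X Y, X ∈ g x → B (φ X) Y = -(sgn K α x) * B X (φ Y)

/-- Scalar-valued Malcev 2-cocycle. -/
def IsCocycle (g : ZMod 2 → Submodule K V) (mul : V →ₗ[K] V →ₗ[K] V)
    (ω : V →ₗ[K] V →ₗ[K] K) : Prop :=
  (∀ x y X Y, X ∈ g x → Y ∈ g y → ω X Y = -(sgn K x y) * ω Y X) ∧
    (∀ x y z t X Y Z T, X ∈ g x → Y ∈ g y → Z ∈ g z → T ∈ g t →
      sgn K y z * ω (mul X Z) (mul Y T) =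
        ω (mul (mul X Y) Z) T + sgn K x (y + z + t) * ω (mul (mul Y Z) T) X +
          sgn K (x + y) (z + t) * ω (mul (mul Z T) X) Y +
          sgn K t (x + y + z) * ω (mul (mul T X) Y) Z)

/-- The four compatibility conditions on an odd operator `D` and `A₀ ∈ M₀` entering the
generalized double extension. -/
def GDEConds (g : ZMod 2 → Submodule K V) (mul : V →ₗ[K] V →ₗ[K] V)
    (D : V →ₗ[K] V) (A0 : V) : Prop :=
  D (D A0) = (1 / 2 : K) • mul A0 A0 ∧
    (∀ X, D (mul A0 X) = mul A0 (D X) - mul (D A0) X) ∧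
    (∀ x y X Y, X ∈ g x → Y ∈ g y →
      mul (mul A0 X) Y =
        D (mul (D X) Y) + D (D (mul X Y)) + ((-1 : K) ^ x.val) • mul (D X) (D Y) +
          sgn K x y • mul (D (D Y)) X) ∧
    (∀ x y X Y, X ∈ g x → Y ∈ g y →
      mul A0 (mul X Y) =
        D (mul (D X) Y) + mul (D (D X)) Y -
          sgn K x y • (mul (D (D Y)) X + D (mul (D Y) X)))

/-- The grading of the generalized double extension `Ke ⊕ M ⊕ Ke*` (with `e`, `e*` odd),
realized on the carrier `K × V × K`. -/
def gdeGrading (g : ZMod 2 → Submodule K V) : ZMod 2 → Submodule K (K × V × K) := fun x =>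
  if x = 0 then (⊥ : Submodule K K).prod ((g 0).prod (⊥ : Submodule K K))
  else (⊤ : Submodule K K).prod ((g 1).prod (⊤ : Submodule K K))

/-- The multiplication of the generalized double extension `k = Ke ⊕ M ⊕ Ke*`:
`ee = A₀`, `eX = D(X) - (-1)^x B(X,A₀)e*`, `XY = (XY)_M - B(D(X),Y)e*`, `e* k = 0`
(and `Xe = -(-1)^x eX` by graded skew-symmetry), written out bilinearly on the
carrier `K × V × K` (coordinates: coefficient of `e`, element of `M`, coefficient of `e*`). -/
def GDEMulFormula (g : ZMod 2 → Submodule K V) (mul : V →ₗ[K] V →ₗ[K] V)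
    (B : V →ₗ[K] V →ₗ[K] K) (D : V →ₗ[K] V) (A0 : V)
    (mulE : (K × V × K) →ₗ[K] (K × V × K) →ₗ[K] (K × V × K)) : Prop :=
  ∀ (p q : ZMod 2) (a c b d : K) (X Y : V), X ∈ g p → Y ∈ g q →
    mulE (a, X, c) (b, Y, d) =
      (0, (a * b) • A0 + mul X Y + a • D Y - ((-1 : K) ^ p.val * b) • D X,
        -(a * (-1 : K) ^ q.val * B Y A0) + b * B X A0 - B (D X) Y)

/-- `B`-irreducibility: every graded ideal on which `B` is non-degenerate is trivial. -/
def BIrreducible (g : ZMod 2 → Submodule K V) (mul : V →ₗ[K] V →ₗ[K] V)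
    (B : V →ₗ[K] V →ₗ[K] K) : Prop :=
  ∀ I : Submodule K V, (∀ X ∈ I, ∀ Y, mul X Y ∈ I) →
    I = (I ⊓ g 0) ⊔ (I ⊓ g 1) →
    (∀ X ∈ I, (∀ Y ∈ I, B X Y = 0) → X = 0) → I = ⊥ ∨ I = ⊤

end Defs

lemma sgn_val' (K : Type) [Field K] (a b : ZMod 2) : sgn K a b = (-1:K)^((a*b).val) := by
  have h : ∀ a b : ZMod 2, a.val * b.val = (a*b).val := by decide
  rw [sgn, h]

lemma neg_one_pow_val' (K : Type) [Field K] (u v : ZMod 2) :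
    (-1:K)^u.val * (-1:K)^v.val = (-1:K)^((u+v).val) := by
  have h : ∀ a : ZMod 2, a = 0 ∨ a = 1 := by decide
  rcases h u with hu|hu <;> rcases h v with hv|hv <;> subst hu <;> subst hv <;>
    norm_num [ZMod.val_zero, ZMod.val_one, show ((1:ZMod 2)+1) = 0 from by decide,
      show ZMod.val (2:ZMod 2) = 0 from rfl]

lemma sgn_mul_sgn (K : Type) [Field K] {a b c d e f : ZMod 2} (h : a*b + c*d = e*f) :
    sgn K a b * sgn K c d = sgn K e f := by
  rw [sgn_val', sgn_val', sgn_val', ← h, neg_one_pow_val']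

lemma sgn_zero_zero (K : Type) [Field K] : sgn K 0 0 = 1 := by
  rw [sgn_val']
  norm_num [show ((0:ZMod 2)*0).val = 0 from rfl]

lemma sgn_mul_sgn_one (K : Type) [Field K] {a b c d : ZMod 2} (h : a*b + c*d = 0) :
    sgn K a b * sgn K c d = 1 := by
  rw [sgn_mul_sgn (K := K) (e := 0) (f := 0) (by simpa using h), sgn_zero_zero]

lemma sgn3 (K : Type) [Field K] {a b c d e f p q : ZMod 2} (h : a*b + c*d + e*f = p*q) :
    sgn K a b * sgn K c d * sgn K e f = sgn K p q := by
  rw [sgn_val', sgn_val', sgn_val', sgn_val', ← h, neg_one_pow_val', neg_one_pow_val']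

lemma sgn3_one (K : Type) [Field K] {a b c d e f : ZMod 2} (h : a*b + c*d + e*f = 0) :
    sgn K a b * sgn K c d * sgn K e f = 1 := by
  rw [sgn3 (K := K) (p := 0) (q := 0) (by simpa using h), sgn_zero_zero]

lemma sgn4 (K : Type) [Field K] {a b c d e f i j p q : ZMod 2}
    (h : a*b + c*d + e*f + i*j = p*q) :
    sgn K a b * sgn K c d * sgn K e f * sgn K i j = sgn K p q := by
  rw [sgn_val', sgn_val', sgn_val', sgn_val', sgn_val', ← h, neg_one_pow_val',
    neg_one_pow_val', neg_one_pow_val']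

lemma sgn_sq (K : Type) [Field K] (a b : ZMod 2) : sgn K a b * sgn K a b = 1 :=
  sgn_mul_sgn_one K (by revert a b; decide)

/-- for an odd skew-supersymmetric Malcev operator `D`, the bilinear form
`(X,Y) ↦ -B(D(X),Y)` is a Malcev 2-cocycle on `M`. -/
theorem stmt3 (K : Type) [Field K] [CharZero K]
    (V : Type) [AddCommGroup V] [Module K V] [FiniteDimensional K V]
    (g : ZMod 2 → Submodule K V) (mul : V →ₗ[K] V →ₗ[K] V) (B : V →ₗ[K] V →ₗ[K] K)
    (hM : IsMalcevSuper K V g mul) (hQ : IsQuadratic K V g mul B)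
    (D : V →ₗ[K] V) (hD1 : IsHomogMap K V g 1 D)
    (hDop : IsMalcevOp K V g mul D) (hDsk : IsSkewSuper K V g B 1 D) :
    IsCocycle K V g mul (-(B ∘ₗ D)) := by
  obtain ⟨hdec, hgrade, hskewmul, hmalcev⟩ := hM
  obtain ⟨horth, hsym, hnondeg, hinv⟩ := hQ
  -- reversed skew-symmetry of D
  have hsk' : ∀ (x : ZMod 2) (X W : V), X ∈ g x →
      B X (D W) = -(sgn K 1 x) * B (D X) W := by
    intro x X W hX
    have h := hDsk x X W hX
    have h2 := sgn_sq K 1 x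
    linear_combination (sgn K 1 x) * h + (-(B X (D W))) * h2
  constructor
  · intro x y X Y hX hY
    simp only [LinearMap.neg_apply, LinearMap.comp_apply]
    have h1 := hDsk x X Y hX
    have h2 := hsym x (y+1) X (D Y) hX (hD1 y Y hY)
    have hsg : sgn K 1 x * sgn K x (y+1) = sgn K x y :=
      sgn_mul_sgn K (by clear * - x y; revert x y; decide)
    linear_combination (-1 : K) * h1 + (sgn K 1 x) * h2 + (B (D Y) X) * hsg
  · intro x y z t X Y Z T hX hY hZ hT
    simp only [LinearMap.neg_apply, LinearMap.comp_apply]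
    -- memberships
    have hYZ : mul Y Z ∈ g (y + z) := hgrade y z Y Z hY hZ
    have hYZT : mul (mul Y Z) T ∈ g (y + z + t) := hgrade (y+z) t _ T hYZ hT
    have hZT : mul Z T ∈ g (z + t) := hgrade z t Z T hZ hT
    have hZTX : mul (mul Z T) X ∈ g (z + t + x) := hgrade (z+t) x _ X hZT hX
    have hTX : mul T X ∈ g (t + x) := hgrade t x T X hT hX
    have hTXY : mul (mul T X) Y ∈ g (t + x + y) := hgrade (t+x) y _ Y hTX hY
    have hXDY : mul X (D Y) ∈ g (x + (y+1)) := hgrade x (y+1) X (D Y) hX (hD1 y Y hY)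
    have hXYDZ : mul X (mul Y (D Z)) ∈ g (x + (y + (z+1))) :=
      hgrade x (y+(z+1)) X _ hX (hgrade y (z+1) Y (D Z) hY (hD1 z Z hZ))
    -- h1 : move LHS pairing
    have h1 : B (mul (D (mul X Z)) Y) T = B (D (mul X Z)) (mul Y T) := hinv _ _ _
    -- h2
    have a2 := hsym (y+z+t+1) x (D (mul (mul Y Z) T)) X (hD1 (y+z+t) _ hYZT) hX
    have b2 := hsk' x X (mul (mul Y Z) T) hX
    have c2 := hinv (D X) (mul Y Z) T
    have hsign2 : sgn K x (y+z+t) * sgn K (y+z+t+1) x * sgn K 1 x = 1 :=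
      sgn3_one K (by clear * - x y z t; revert x y z t; decide)
    have h2 : sgn K x (y + z + t) * B (D (mul (mul Y Z) T)) X =
        -(B (mul (D X) (mul Y Z)) T) := by
      linear_combination (sgn K x (y+z+t)) * a2 +
        (sgn K x (y+z+t) * sgn K (y+z+t+1) x) * b2 + c2 +
        (-(B (D X) (mul (mul Y Z) T))) * hsign2
    -- h3
    have a3 := hDsk (z+t+x) (mul (mul Z T) X) Y hZTX
    have b3 := hinv (mul Z T) X (D Y)
    have c3 := hsym (z+t) (x+(y+1)) (mul Z T) (mul X (D Y)) hZT hXDY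
    have d3 := hinv (mul X (D Y)) Z T
    have hsign3 : sgn K (x+y) (z+t) * sgn K 1 (z+t+x) * sgn K (z+t) (x+(y+1)) = sgn K 1 x :=
      sgn3 K (by clear * - x y z t; revert x y z t; decide)
    have h3 : sgn K (x + y) (z + t) * B (D (mul (mul Z T) X)) Y =
        -(sgn K 1 x) * B (mul (mul X (D Y)) Z) T := by
      linear_combination (sgn K (x+y) (z+t)) * a3 -
        (sgn K (x+y) (z+t) * sgn K 1 (z+t+x)) * b3 -
        (sgn K (x+y) (z+t) * sgn K 1 (z+t+x)) * c3 + (sgn K 1 x) * d3 +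
        (-(B (mul X (D Y)) (mul Z T))) * hsign3
    -- h4
    have a4 := hDsk (t+x+y) (mul (mul T X) Y) Z hTXY
    have b4 := hinv (mul T X) Y (D Z)
    have b4' := hinv T X (mul Y (D Z))
    have c4 := hsym t (x+(y+(z+1))) T (mul X (mul Y (D Z))) hT hXYDZ
    have hsign4 : sgn K t (x+y+z) * sgn K 1 (t+x+y) * sgn K t (x+(y+(z+1))) = sgn K 1 (x+y) :=
      sgn3 K (by clear * - x y z t; revert x y z t; decide)
    have h4 : sgn K t (x + y + z) * B (D (mul (mul T X) Y)) Z =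
        -(sgn K 1 (x+y)) * B (mul X (mul Y (D Z))) T := by
      linear_combination (sgn K t (x+y+z)) * a4 -
        (sgn K t (x+y+z) * sgn K 1 (t+x+y)) * (b4 + b4' + c4) +
        (-(B (mul X (mul Y (D Z))) T)) * hsign4
    -- Malcev operator identity instance, paired with T
    have E := hDop y x z Y X Z hY hX hZ
    have EB : B (D (mul (mul Y X) Z)) T =
        B (mul (mul (D Y) X) Z) T - sgn K y x * B (mul (D X) (mul Y Z)) T -
          sgn K z (y + x) * B (mul (mul (D Z) Y) X) T -
          sgn K y (x + z) * B (mul (D (mul X Z)) Y) T := by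
      rw [E]
      simp only [map_sub, map_smul, LinearMap.sub_apply, LinearMap.smul_apply, smul_eq_mul]
    -- orientation fixes
    have e1 : mul Y X = -(sgn K y x) • mul X Y := hskewmul y x Y X hY hX
    have f1 : B (D (mul (mul Y X) Z)) T = -(sgn K y x) * B (D (mul (mul X Y) Z)) T := by
      rw [e1]
      simp only [neg_smul, map_neg, map_smul, LinearMap.neg_apply, LinearMap.smul_apply,
        smul_eq_mul]
      ring
    have e2 : mul (D Y) X = -(sgn K (y+1) x) • mul X (D Y) :=
      hskewmul (y+1) x (D Y) X (hD1 y Y hY) hX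
    have f2 : B (mul (mul (D Y) X) Z) T = -(sgn K (y+1) x) * B (mul (mul X (D Y)) Z) T := by
      rw [e2]
      simp only [neg_smul, map_neg, map_smul, LinearMap.neg_apply, LinearMap.smul_apply,
        smul_eq_mul]
      ring
    have e3a : mul (mul (D Z) Y) X = -(sgn K (z+1+y) x) • mul X (mul (D Z) Y) :=
      hskewmul (z+1+y) x (mul (D Z) Y) X (hgrade (z+1) y (D Z) Y (hD1 z Z hZ) hY) hX
    have e3b : mul (D Z) Y = -(sgn K (z+1) y) • mul Y (D Z) :=
      hskewmul (z+1) y (D Z) Y (hD1 z Z hZ) hY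
    have f3 : B (mul (mul (D Z) Y) X) T =
        (sgn K (z+1+y) x * sgn K (z+1) y) * B (mul X (mul Y (D Z))) T := by
      rw [e3a, e3b]
      simp only [neg_smul, map_neg, map_smul, LinearMap.neg_apply, LinearMap.smul_apply,
        smul_eq_mul]
      ring
    -- sign identities for the key combination
    have σ0 := sgn_sq K y x
    have σ1 : sgn K y x * sgn K (y+1) x = sgn K 1 x :=
      sgn_mul_sgn K (by clear * - x y; revert x y; decide)
    have σ2 : sgn K y x * sgn K z (y+x) * sgn K (z+1+y) x * sgn K (z+1) y = sgn K 1 (x+y) :=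
      sgn4 K (by clear * - x y z; revert x y z; decide)
    have σ3 : sgn K y x * sgn K y (x+z) = sgn K y z :=
      sgn_mul_sgn K (by clear * - x y z; revert x y z; decide)
    have keyS : B (D (mul (mul X Y) Z)) T =
        sgn K y z * B (mul (D (mul X Z)) Y) T + B (mul (D X) (mul Y Z)) T +
          sgn K 1 x * B (mul (mul X (D Y)) Z) T +
          sgn K 1 (x+y) * B (mul X (mul Y (D Z))) T := by
      linear_combination (-(sgn K y x)) * EB + (sgn K y x) * f1 + (-(sgn K y x)) * f2 +
        (sgn K y x * sgn K z (y+x)) * f3 +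
        (-(B (D (mul (mul X Y) Z)) T - B (mul (D X) (mul Y Z)) T)) * σ0 +
        (B (mul (D (mul X Z)) Y) T) * σ3 +
        (B (mul (mul X (D Y)) Z) T) * σ1 +
        (B (mul X (mul Y (D Z))) T) * σ2
    linear_combination keyS + (sgn K y z) * h1 + h2 + h3 + h4
end

section
/- Let M = M_0 ⊕ M_1 with M_0 = span{a} one-dimensional and M_1 = span{v_1,...,v_n,y_1,...,y_n}, with multiplication a·v_i = y_i = -v_i·a, M·y_i = 0, v_i·v_j = δ_{ij}a, and bilinear form B(a,a)=1, B(M_1,a)=0, B(y_i,y_j)=B(v_i,v_j)=0, B(y_i,v_j)=δ_{ij}=-B(v_j,y_i). Then M is a Malcev superalgebra and B is an invariant scalar product on M (i.e., (M,B) is a quadratic Malcev superalgebra). -/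
open scoped BigOperators

/-! The Malcev identity holds trivially here: `a` and the `yᵢ` span the square of `M`, and
`M²·M² = 0` and `((M·M)·M)·M = 0` because `yᵢ` annihilates everything and `a·a = 0`.
The remaining axioms are bilinear identities that only need checking on homogeneous elements,
that is, on `(α, 0, 0)` and `(0, v, y)`. -/

section Sgn

variable {K : Type} [Field K]

@[simp]
theorem sgn_zero_left (y : ZMod 2) : sgn K 0 y = 1 := by
  simp [sgn]

@[simp]
theorem sgn_zero_right (x : ZMod 2) : sgn K x 0 = 1 := by
  simp [sgn]

@[simp]
theorem sgn_one_one : sgn K 1 1 = -1 := by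
  simp [sgn, ZMod.val_one]

end Sgn

section ProdGrading

variable (R A W : Type) [Ring R] [AddCommGroup A] [Module R A] [AddCommGroup W] [Module R W]

def prodGrading : ZMod 2 → Submodule R (A × W) := fun x =>
  if x = 0 then (⊤ : Submodule R A).prod (⊥ : Submodule R W)
  else (⊥ : Submodule R A).prod (⊤ : Submodule R W)

variable {R A W}

theorem mem_prodGrading_zero {X : A × W} : X ∈ prodGrading R A W 0 ↔ X.2 = 0 := by
  simp [prodGrading]

theorem mem_prodGrading_one {X : A × W} : X ∈ prodGrading R A W 1 ↔ X.1 = 0 := by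
  simp [prodGrading]

theorem prodGrading_isInternal : DirectSum.IsInternal (prodGrading R A W) := by
  rw [DirectSum.isInternal_submodule_iff_isCompl _ zero_ne_one (by ext x; revert x; decide)]
  convert LinearMap.isCompl_range_inl_inr (R := R) (M := A) (M₂ := W) using 1
  · ext X; simp [mem_prodGrading_zero, LinearMap.range_inl]
  · ext X; simp [mem_prodGrading_one, LinearMap.range_inr]

theorem forall₂_mem_prodGrading {P : ZMod 2 → ZMod 2 → A × W → A × W → Prop} :
    (∀ x y X Y, X ∈ prodGrading R A W x → Y ∈ prodGrading R A W y → P x y X Y) ↔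
      (∀ a b, P 0 0 (a, 0) (b, 0)) ∧ (∀ a w, P 0 1 (a, 0) (0, w)) ∧
        (∀ w a, P 1 0 (0, w) (a, 0)) ∧ ∀ w w', P 1 1 (0, w) (0, w') := by
  have h₀ {a : A} : ((a, 0) : A × W) ∈ prodGrading R A W 0 := mem_prodGrading_zero.2 rfl
  have h₁ {w : W} : ((0, w) : A × W) ∈ prodGrading R A W 1 := mem_prodGrading_one.2 rfl
  refine ⟨fun h => ⟨fun _ _ => h _ _ _ _ h₀ h₀, fun _ _ => h _ _ _ _ h₀ h₁,
    fun _ _ => h _ _ _ _ h₁ h₀, fun _ _ => h _ _ _ _ h₁ h₁⟩, ?_⟩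
  rintro ⟨h00, h01, h10, h11⟩ x y ⟨a, w⟩ ⟨b, w'⟩ hX hY
  fin_cases x <;> fin_cases y
  all_goals first
    | obtain rfl : w = 0 := mem_prodGrading_zero.1 hX
    | obtain rfl : a = 0 := mem_prodGrading_one.1 hX
  all_goals first
    | obtain rfl : w' = 0 := mem_prodGrading_zero.1 hY
    | obtain rfl : b = 0 := mem_prodGrading_one.1 hY
  exacts [h00 a b, h01 a w', h10 w b, h11 w w']

end ProdGrading

theorem isMalcevSuper_of_mul_mul_mul_eq_zero {K V : Type} [Field K] [AddCommGroup V] [Module K V]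
    {g : ZMod 2 → Submodule K V} {mul : V →ₗ[K] V →ₗ[K] V} (hg : DirectSum.IsInternal g)
    (hmem : ∀ x y X Y, X ∈ g x → Y ∈ g y → mul X Y ∈ g (x + y))
    (hskew : ∀ x y X Y, X ∈ g x → Y ∈ g y → mul X Y = -(sgn K x y) • mul Y X)
    (hM2M2 : ∀ X Y Z T, mul (mul X Y) (mul Z T) = 0)
    (hM4 : ∀ X Y Z T, mul (mul (mul X Y) Z) T = 0) : IsMalcevSuper K V g mul :=
  ⟨hg, hmem, hskew, fun _ _ _ _ X Y Z T _ _ _ _ => by simp [hM2M2, hM4]⟩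

section Example

variable {K ι : Type} [Field K] [Fintype ι]

def IsExampleMul
    (mul : (K × (ι → K) × (ι → K)) →ₗ[K] (K × (ι → K) × (ι → K)) →ₗ[K]
      (K × (ι → K) × (ι → K))) : Prop :=
  ∀ (α β : K) (v y w z : ι → K),
    mul (α, v, y) (β, w, z) = (∑ i, v i * w i, 0, α • w - β • v)

def IsExampleForm
    (B : (K × (ι → K) × (ι → K)) →ₗ[K] (K × (ι → K) × (ι → K)) →ₗ[K] K) :
    Prop :=
  ∀ (α β : K) (v y w z : ι → K),
    B (α, v, y) (β, w, z) = α * β + (∑ i, y i * w i) - ∑ i, v i * z i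

variable
  {mul : (K × (ι → K) × (ι → K)) →ₗ[K] (K × (ι → K) × (ι → K)) →ₗ[K]
    (K × (ι → K) × (ι → K))}
  {B : (K × (ι → K) × (ι → K)) →ₗ[K] (K × (ι → K) × (ι → K)) →ₗ[K] K}
  (x y : ZMod 2) (X Y Z T : K × (ι → K) × (ι → K))

namespace IsExampleMul

theorem apply (hmul : IsExampleMul mul) :
    mul X Y = (∑ i, X.2.1 i * Y.2.1 i, 0, X.1 • Y.2.1 - Y.1 • X.2.1) :=
  hmul _ _ _ _ _ _

theorem mul_mul_mul_left_eq_zero (hmul : IsExampleMul mul) :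
    mul (mul (mul X Y) Z) T = 0 := by
  simp [hmul.apply]

theorem mul_mul_mul_eq_zero (hmul : IsExampleMul mul) :
    mul (mul X Y) (mul Z T) = 0 := by
  simp [hmul.apply]

theorem mul_mem (hmul : IsExampleMul mul)
    (hX : X ∈ prodGrading K K _ x) (hY : Y ∈ prodGrading K K _ y) :
    mul X Y ∈ prodGrading K K _ (x + y) := by
  revert x y X Y
  refine forall₂_mem_prodGrading.2 ⟨?_, ?_, ?_, ?_⟩ <;>
    simp [hmul.apply, mem_prodGrading_zero, mem_prodGrading_one,
      show (1 : ZMod 2) + 1 = 0 by decide]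

theorem mul_eq_neg_sgn_smul (hmul : IsExampleMul mul)
    (hX : X ∈ prodGrading K K _ x) (hY : Y ∈ prodGrading K K _ y) :
    mul X Y = -(sgn K x y) • mul Y X := by
  revert x y X Y
  refine forall₂_mem_prodGrading.2 ⟨?_, ?_, ?_, ?_⟩ <;> simp [hmul.apply, mul_comm]

theorem isMalcevSuper (hmul : IsExampleMul mul) :
    IsMalcevSuper K _ (prodGrading K K ((ι → K) × (ι → K))) mul :=
  isMalcevSuper_of_mul_mul_mul_eq_zero prodGrading_isInternal hmul.mul_mem hmul.mul_eq_neg_sgn_smul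
    hmul.mul_mul_mul_eq_zero hmul.mul_mul_mul_left_eq_zero

end IsExampleMul

namespace IsExampleForm

theorem apply (hB : IsExampleForm B) :
    B X Y = X.1 * Y.1 + (∑ i, X.2.2 i * Y.2.1 i) - ∑ i, X.2.1 i * Y.2.2 i :=
  hB _ _ _ _ _ _

theorem apply_eq_zero_of_ne (hB : IsExampleForm B)
    (hX : X ∈ prodGrading K K _ x) (hY : Y ∈ prodGrading K K _ y) (hxy : x ≠ y) :
    B X Y = 0 := by
  revert x y X Y
  refine forall₂_mem_prodGrading.2 ⟨?_, ?_, ?_, ?_⟩ <;> simp [hB.apply]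

theorem apply_eq_sgn_mul (hB : IsExampleForm B)
    (hX : X ∈ prodGrading K K _ x) (hY : Y ∈ prodGrading K K _ y) :
    B X Y = sgn K x y * B Y X := by
  revert x y X Y
  refine forall₂_mem_prodGrading.2 ⟨?_, ?_, ?_, ?_⟩ <;> simp [hB.apply, mul_comm]

theorem eq_zero_of_forall_apply_eq_zero (hB : IsExampleForm B)
    (hX : ∀ Y, B X Y = 0) : X = 0 := by
  classical
  obtain ⟨α, v, y⟩ := X
  have hα : α = 0 := by simpa [hB.apply] using hX (1, 0, 0)
  have hv : v = 0 := funext fun i => by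
    simpa [hB.apply, Pi.single_apply] using hX (0, 0, Pi.single i 1)
  have hy : y = 0 := funext fun i => by
    simpa [hB.apply, Pi.single_apply] using hX (0, Pi.single i 1, 0)
  simp [hα, hv, hy]

theorem apply_mul (hB : IsExampleForm B) (hmul : IsExampleMul mul) :
    B (mul X Y) Z = B X (mul Y Z) := by
  simp only [hB.apply, hmul.apply, Pi.zero_apply, Pi.sub_apply, Pi.smul_apply, smul_eq_mul,
    zero_mul, mul_zero, Finset.sum_const_zero, add_zero, sub_zero, Finset.sum_mul, Finset.mul_sum,
    ← Finset.sum_add_distrib, ← Finset.sum_sub_distrib]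
  exact Finset.sum_congr rfl fun i _ => by ring

theorem isQuadratic (hB : IsExampleForm B) (hmul : IsExampleMul mul) :
    IsQuadratic K _ (prodGrading K K ((ι → K) × (ι → K))) mul B :=
  ⟨hB.apply_eq_zero_of_ne, hB.apply_eq_sgn_mul, hB.eq_zero_of_forall_apply_eq_zero,
    (hB.apply_mul · · · hmul)⟩

end IsExampleForm

end Example

/-- The carrier is `K × (Fin n → K) × (Fin n → K)`, with coordinates
(coefficient of `a`, coefficients of the `vᵢ`, coefficients of the `yᵢ`). -/
theorem stmt9_general (K : Type) [Field K] (n : ℕ)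
    (mul : (K × (Fin n → K) × (Fin n → K)) →ₗ[K] (K × (Fin n → K) × (Fin n → K)) →ₗ[K]
      (K × (Fin n → K) × (Fin n → K)))
    (hmul : ∀ (α β : K) (v y w z : Fin n → K),
      mul (α, v, y) (β, w, z) = (∑ i, v i * w i, (0 : Fin n → K), α • w - β • v))
    (B : (K × (Fin n → K) × (Fin n → K)) →ₗ[K] (K × (Fin n → K) × (Fin n → K)) →ₗ[K] K)
    (hB : ∀ (α β : K) (v y w z : Fin n → K),
      B (α, v, y) (β, w, z) = α * β + (∑ i, y i * w i) - ∑ i, v i * z i) :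
    IsMalcevSuper K (K × (Fin n → K) × (Fin n → K))
      (fun x => if x = 0 then (⊤ : Submodule K K).prod (⊥ : Submodule K ((Fin n → K) × (Fin n → K)))
        else (⊥ : Submodule K K).prod (⊤ : Submodule K ((Fin n → K) × (Fin n → K)))) mul ∧
    IsQuadratic K (K × (Fin n → K) × (Fin n → K))
      (fun x => if x = 0 then (⊤ : Submodule K K).prod (⊥ : Submodule K ((Fin n → K) × (Fin n → K)))
        else (⊥ : Submodule K K).prod (⊤ : Submodule K ((Fin n → K) × (Fin n → K)))) mul B :=
  ⟨IsExampleMul.isMalcevSuper hmul, IsExampleForm.isQuadratic hB hmul⟩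

/-- the example: `M₀ = span{a}`, `M₁ = span{v₁,…,vₙ,y₁,…,yₙ}` with
`a·vᵢ = yᵢ = -vᵢ·a`, `M·yᵢ = 0`, `vᵢ·vⱼ = δᵢⱼ a`, and
`B(a,a) = 1`, `B(yᵢ,vⱼ) = δᵢⱼ = -B(vⱼ,yᵢ)`, all other pairings zero,
is a quadratic Malcev superalgebra.  The carrier is `K × (Fin n → K) × (Fin n → K)`
with coordinates (coefficient of `a`, coefficients of the `vᵢ`, coefficients of the `yᵢ`). -/
theorem stmt9 (K : Type) [Field K] [CharZero K] [IsAlgClosed K] (n : ℕ)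
    (mul : (K × (Fin n → K) × (Fin n → K)) →ₗ[K] (K × (Fin n → K) × (Fin n → K)) →ₗ[K]
      (K × (Fin n → K) × (Fin n → K)))
    (hmul : ∀ (α β : K) (v y w z : Fin n → K),
      mul (α, v, y) (β, w, z) = (∑ i, v i * w i, (0 : Fin n → K), α • w - β • v))
    (B : (K × (Fin n → K) × (Fin n → K)) →ₗ[K] (K × (Fin n → K) × (Fin n → K)) →ₗ[K] K)
    (hB : ∀ (α β : K) (v y w z : Fin n → K),
      B (α, v, y) (β, w, z) = α * β + (∑ i, y i * w i) - ∑ i, v i * z i) :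
    IsMalcevSuper K (K × (Fin n → K) × (Fin n → K))
      (fun x => if x = 0 then (⊤ : Submodule K K).prod (⊥ : Submodule K ((Fin n → K) × (Fin n → K)))
        else (⊥ : Submodule K K).prod (⊤ : Submodule K ((Fin n → K) × (Fin n → K)))) mul ∧
    IsQuadratic K (K × (Fin n → K) × (Fin n → K))
      (fun x => if x = 0 then (⊤ : Submodule K K).prod (⊥ : Submodule K ((Fin n → K) × (Fin n → K)))
        else (⊥ : Submodule K K).prod (⊤ : Submodule K ((Fin n → K) × (Fin n → K)))) mul B :=
  stmt9_general K n mul hmul B hB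
end
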